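/- With J = A ∪ B, δ_J ≤ δ < 1, coherence μ, and noise vector e ∈ ℝ^d, for every k ∉ J we have |⟨a_k, Q(D_J) e⟩| ≤ (1 + μ√(|J|·|B|)/(1−δ)) · max_{k' ∉ A} |⟨Q(D_A) a_{k'}, e⟩|. -/

import Mathlib

/-!
Write the projection of `a k` onto `span a_J` as `∑_{j ∈ J} c_j a_j`. The residual
`Q_J a_k = a_k - ∑ c_j a_j` already lies in `(span a_A)ᗮ`, so applying `Q_A` to it kills the
`A`-part of the sum: `Q_J a_k = Q_A a_k - ∑_{j ∈ B} c_j Q_A a_j`. Moving the self-adjoint `Q_J`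
onto `e` bounds the left-hand side by `(1 + ∑_{j ∈ B} |c_j|) C`.

The coefficients solve the Gram system `G c = (⟪a_i, a_k⟫)_{i ∈ J}`, whose right-hand side has
norm at most `√|J| μ`, and `‖G - 1‖ ≤ δ` gives `(1 - δ) ‖c‖ ≤ ‖G c‖`. Cauchy–Schwarz finishes:
`∑_{j ∈ B} |c_j| ≤ √|B| ‖c‖`.
-/

open scoped RealInnerProductSpace
open Finset

theorem ContinuousLinearMap.one_sub_mul_norm_le_norm_apply {𝕜 E : Type*}
    [NontriviallyNormedField 𝕜] [SeminormedAddCommGroup E] [NormedSpace 𝕜 E]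
    {T : E →L[𝕜] E} {δ : ℝ} (hT : ‖T - 1‖ ≤ δ) (x : E) : (1 - δ) * ‖x‖ ≤ ‖T x‖ := by
  have h : ‖T x - x‖ ≤ δ * ‖x‖ :=
    calc ‖T x - x‖ = ‖(T - 1) x‖ := rfl
      _ ≤ ‖T - 1‖ * ‖x‖ := (T - 1).le_opNorm x
      _ ≤ δ * ‖x‖ := by gcongr
  linarith [norm_sub_norm_le x (T x), norm_sub_rev x (T x)]

theorem one_sub_mul_sqrt_sum_sq_le_of_norm_gram_sub_one_le {ι E : Type*} [DecidableEq ι]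
    [NormedAddCommGroup E] [InnerProductSpace ℝ E] (a : ι → E) (J : Finset ι) {δ : ℝ}
    (hδ : ‖Matrix.toEuclideanCLM (𝕜 := ℝ) (Matrix.gram ℝ fun i : J => a i) - 1‖ ≤ δ)
    (c : ι → ℝ) :
    (1 - δ) * √(∑ j ∈ J, c j ^ 2) ≤ √(∑ i ∈ J, ⟪a i, ∑ j ∈ J, c j • a j⟫ ^ 2) := by
  have h := ContinuousLinearMap.one_sub_mul_norm_le_norm_apply hδ (WithLp.toLp 2 fun j : J => c j)
  simpa only [EuclideanSpace.norm_eq, Matrix.toEuclideanCLM_toLp, Matrix.mulVec, dotProduct,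
    Matrix.gram_apply, Real.norm_eq_abs, sq_abs, inner_sum, inner_smul_right, mul_comm,
    ← Finset.sum_coe_sort J, univ_eq_attach] using h

theorem Real.sum_abs_le_sqrt_card_mul_sqrt_sum_sq {ι : Type*} (s : Finset ι) (f : ι → ℝ) :
    ∑ i ∈ s, |f i| ≤ √(#s : ℝ) * √(∑ i ∈ s, f i ^ 2) := by
  simpa using Real.sum_mul_le_sqrt_mul_sqrt s 1 (fun i => |f i|)

theorem Real.sqrt_sum_sq_le_sqrt_card_mul_of_abs_le {ι : Type*} {s : Finset ι} {f : ι → ℝ}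
    {μ : ℝ} (hf : ∀ i ∈ s, |f i| ≤ μ) : √(∑ i ∈ s, f i ^ 2) ≤ √(#s : ℝ) * μ := by
  obtain rfl | ⟨i, hi⟩ := s.eq_empty_or_nonempty
  · simp
  have hμ : 0 ≤ μ := (abs_nonneg _).trans (hf i hi)
  have hsq : ∀ i ∈ s, f i ^ 2 ≤ μ ^ 2 := fun i hi => by
    simpa only [sq_abs] using pow_le_pow_left₀ (abs_nonneg _) (hf i hi) 2
  calc √(∑ i ∈ s, f i ^ 2) ≤ √(#s * μ ^ 2) := by
        simpa only [nsmul_eq_mul] using Real.sqrt_le_sqrt (Finset.sum_le_card_nsmul s _ _ hsq)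
    _ = √(#s : ℝ) * μ := by rw [Real.sqrt_mul (Nat.cast_nonneg _), Real.sqrt_sq hμ]

theorem abs_sub_sum_mul_le {ι : Type*} {s : Finset ι} {c₀ C S : ℝ} {c y : ι → ℝ}
    (h₀ : |c₀| ≤ C) (hc : ∀ i ∈ s, |c i| ≤ C) (hy : ∑ i ∈ s, |y i| ≤ S) :
    |c₀ - ∑ i ∈ s, y i * c i| ≤ (1 + S) * C := by
  have hC : 0 ≤ C := (abs_nonneg _).trans h₀
  calc |c₀ - ∑ i ∈ s, y i * c i| ≤ |c₀| + ∑ i ∈ s, |y i| * |c i| := by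
        refine (abs_sub _ _).trans (add_le_add_right ?_ _)
        simpa only [abs_mul] using Finset.abs_sum_le_sum_abs (fun i => y i * c i) s
    _ ≤ C + ∑ i ∈ s, |y i| * C := by gcongr with i hi; exact hc i hi
    _ ≤ (1 + S) * C := by rw [← Finset.sum_mul]; nlinarith

theorem sum_abs_le_of_norm_gram_sub_one_le {ι E : Type*} [DecidableEq ι]
    [NormedAddCommGroup E] [InnerProductSpace ℝ E] (a : ι → E) {J B : Finset ι} (hBJ : B ⊆ J)
    {δ : ℝ} (hδ : ‖Matrix.toEuclideanCLM (𝕜 := ℝ) (Matrix.gram ℝ fun i : J => a i) - 1‖ ≤ δ)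
    (hδ1 : δ < 1) (c : ι → ℝ) {μ : ℝ} (hμ : ∀ i ∈ J, |⟪a i, ∑ j ∈ J, c j • a j⟫| ≤ μ) :
    ∑ j ∈ B, |c j| ≤ μ * √(#J * #B) / (1 - δ) :=
  calc ∑ j ∈ B, |c j| ≤ √(#B : ℝ) * √(∑ j ∈ B, c j ^ 2) :=
        Real.sum_abs_le_sqrt_card_mul_sqrt_sum_sq B c
    _ ≤ √(#B : ℝ) * √(∑ j ∈ J, c j ^ 2) := by gcongr
    _ ≤ √(#B : ℝ) * (√(#J : ℝ) * μ / (1 - δ)) := by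
        gcongr
        rw [le_div_iff₀' (by linarith)]
        exact (one_sub_mul_sqrt_sum_sq_le_of_norm_gram_sub_one_le a J hδ c).trans
          (Real.sqrt_sum_sq_le_sqrt_card_mul_of_abs_le hμ)
    _ = μ * √(#J * #B) / (1 - δ) := by rw [Real.sqrt_mul (Nat.cast_nonneg _)]; ring

namespace Submodule

variable {𝕜 E : Type*} [RCLike 𝕜] [NormedAddCommGroup E] [InnerProductSpace 𝕜 E]

theorem orthogonal_starProjection_eq_sub_of_le {K L : Submodule 𝕜 E}
    [K.HasOrthogonalProjection] [L.HasOrthogonalProjection] (hKL : K ≤ L) {w s t : E}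
    (hs : s ∈ K) (h : Lᗮ.starProjection w = w - s - t) :
    Lᗮ.starProjection w = Kᗮ.starProjection w - Kᗮ.starProjection t := by
  have hK : Lᗮ.starProjection w ∈ Kᗮ := orthogonal_le hKL (coe_mem _)
  rw [← starProjection_eq_self_iff.2 hK, h, map_sub, map_sub,
    starProjection_orthogonal_apply_eq_zero hs, sub_zero]

theorem inner_starProjection_right_eq_of_mem (K : Submodule 𝕜 E) [K.HasOrthogonalProjection]
    {u : E} (hu : u ∈ K) (v : E) : inner 𝕜 u (K.starProjection v) = inner 𝕜 u v := by
  rw [← inner_starProjection_left_eq_right, starProjection_eq_self_iff.2 hu]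

end Submodule

theorem residual_noise_bound_general {d K : ℕ} (a : Fin K → EuclideanSpace ℝ (Fin d))
    (μ δ C : ℝ) (A B : Finset (Fin K)) (k : Fin K) (e : EuclideanSpace ℝ (Fin d))
    (hμ : ∀ i j, i ≠ j → |⟪a i, a j⟫| ≤ μ)
    (hAB : Disjoint A B)
    (hδ : ‖Matrix.toEuclideanCLM (𝕜 := ℝ) (n := ↥(A ∪ B))
        ((Matrix.of fun i j : ↥(A ∪ B) => ⟪a i, a j⟫) - 1)‖ ≤ δ)
    (hδ1 : δ < 1) (hk : k ∉ A ∪ B)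
    (hC : ∀ k', k' ∉ A →
      |⟪a k' - (Submodule.orthogonalProjectionOnto (Submodule.span ℝ (a '' ↑A)) (a k') :
        EuclideanSpace ℝ (Fin d)), e⟫| ≤ C) :
    |⟪a k, e - (Submodule.orthogonalProjectionOnto (Submodule.span ℝ (a '' ↑(A ∪ B))) e :
        EuclideanSpace ℝ (Fin d))⟫| ≤
      (1 + μ * Real.sqrt ((A ∪ B).card * B.card) / (1 - δ)) * C := by
  set J := A ∪ B
  set VA := Submodule.span ℝ (a '' A)
  set VJ := Submodule.span ℝ (a '' J)
  have hAJ : VA ≤ VJ :=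
    Submodule.span_mono (Set.image_mono (Finset.coe_subset.2 Finset.subset_union_left))
  obtain ⟨c, hc⟩ :=
    (Submodule.mem_span_image_finset_iff_exists_fun' ℝ).1 (VJ.starProjection_apply_mem (a k))
  have hsplit : VJᗮ.starProjection (a k) = a k - ∑ j ∈ A, c j • a j - ∑ j ∈ B, c j • a j := by
    rw [Submodule.starProjection_orthogonal_val, ← hc, Finset.sum_union hAB, sub_add_eq_sub_sub]
  have hres : VJᗮ.starProjection (a k) =
      VAᗮ.starProjection (a k) - ∑ j ∈ B, c j • VAᗮ.starProjection (a j) := by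
    rw [Submodule.orthogonal_starProjection_eq_sub_of_le hAJ
      (Submodule.sum_smul_mem _ _ fun j hj => Submodule.subset_span (Set.mem_image_of_mem a hj))
      hsplit, map_sum]
    simp only [map_smul]
  have hcoef : ∑ j ∈ B, |c j| ≤ μ * √(#J * #B) / (1 - δ) := by
    refine sum_abs_le_of_norm_gram_sub_one_le a Finset.subset_union_right
      (by rwa [map_sub, map_one] at hδ) hδ1 c fun i hi => ?_
    rw [hc, VJ.inner_starProjection_right_eq_of_mem
      (Submodule.subset_span (Set.mem_image_of_mem a hi))]
    exact hμ i k (ne_of_mem_of_not_mem hi hk)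
  simp only [Submodule.coe_orthogonalProjectionOnto_apply,
    ← Submodule.starProjection_orthogonal_val] at hC ⊢
  rw [← Submodule.inner_starProjection_left_eq_right, hres, inner_sub_left, sum_inner]
  simp only [inner_smul_left, RCLike.conj_to_real]
  exact abs_sub_sum_mul_le (hC k fun h => hk (Finset.mem_union_left _ h))
    (fun j hj => hC j (Finset.disjoint_right.1 hAB hj)) hcoef

/-- For `J = A ∪ B` with `A, B` disjoint, coherence `μ`, `δ_J ≤ δ < 1` and `k ∉ J`:
if `C` bounds `|⟨Q(D_A) a k', e⟩|` for all `k' ∉ A`, then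
`|⟨a k, Q(D_J) e⟩| ≤ (1 + μ √(|J|·|B|) / (1 − δ)) · C`. -/
theorem residual_noise_bound {d K : ℕ} (a : Fin K → EuclideanSpace ℝ (Fin d))
    (μ δ C : ℝ) (A B : Finset (Fin K)) (k : Fin K) (e : EuclideanSpace ℝ (Fin d))
    (hnorm : ∀ i, ‖a i‖ = 1)
    (hμ : ∀ i j, i ≠ j → |⟪a i, a j⟫| ≤ μ)
    (hAB : Disjoint A B)
    (hδ : ‖Matrix.toEuclideanCLM (𝕜 := ℝ) (n := ↥(A ∪ B))
        ((Matrix.of fun i j : ↥(A ∪ B) => ⟪a i, a j⟫) - 1)‖ ≤ δ)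
    (hδ1 : δ < 1) (hk : k ∉ A ∪ B)
    (hC : ∀ k', k' ∉ A →
      |⟪a k' - (Submodule.orthogonalProjectionOnto (Submodule.span ℝ (a '' ↑A)) (a k') :
        EuclideanSpace ℝ (Fin d)), e⟫| ≤ C) :
    |⟪a k, e - (Submodule.orthogonalProjectionOnto (Submodule.span ℝ (a '' ↑(A ∪ B))) e :
        EuclideanSpace ℝ (Fin d))⟫| ≤
      (1 + μ * Real.sqrt ((A ∪ B).card * B.card) / (1 - δ)) * C :=
  residual_noise_bound_general a μ δ C A B k e hμ hAB hδ hδ1 hk hC
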